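/- arXiv:2405.12883 — 5 statements merged into one kernel-verified Lean document; each statement's English description precedes it below -/
import Mathlib

section
/- Let Θ ∈ (0, 2π), α = e^{-iΘ}, and d ∈ ℝ with d ∉ (π/Θ)ℤ. Then for every real polynomial Q ∈ ℝ[T] there exists a unique real polynomial P ∈ ℝ[T] such that for all real t, Im(α^d · P(t - iΘ)) = Q(t), where P(t - iΘ) denotes evaluation of P at the complex number t - iΘ and α^d = e^{-idΘ}. Moreover deg P = deg Q. -/
/-! The map `P ↦ Im(α^d · P(X - iΘ))` is an `ℝ`-linear endomorphism of `ℝ[X]`. It preserves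
degrees: the coefficient of `X ^ deg P` in its value is `Im(α^d) · lc P`, and
`Im(α^d) = -sin(dΘ) ≠ 0`. A degree-preserving linear endomorphism of `K[X]` is injective, and it is
surjective since it maps each finite-dimensional space of polynomials of degree `< n` into itself. -/

open Polynomial

namespace Polynomial

noncomputable def imPart : ℂ[X] →ₗ[ℝ] ℝ[X] where
  toFun p := ofFinsupp (p.toFinsupp.map Complex.imAddGroupHom)
  map_add' p q := by ext n; simp
  map_smul' r p := by ext n; simp

lemma coeff_imPart (p : ℂ[X]) (n : ℕ) : (imPart p).coeff n = (p.coeff n).im := rfl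

lemma degree_imPart_le (p : ℂ[X]) : (imPart p).degree ≤ p.degree :=
  degree_le_iff_coeff_zero _ _ |>.2 fun n hn => by
    rw [coeff_imPart, coeff_eq_zero_of_degree_lt hn, Complex.zero_im]

lemma eval_imPart (p : ℂ[X]) (t : ℝ) : (imPart p).eval t = (p.eval (t : ℂ)).im := by
  rw [eval_eq_sum_range' (Nat.lt_succ_of_le (natDegree_le_natDegree (degree_imPart_le p))),
    eval_eq_sum_range, Complex.im_sum]
  refine Finset.sum_congr rfl fun i _ => ?_
  rw [coeff_imPart, ← Complex.ofReal_pow, Complex.im_mul_ofReal]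

/-- `P ↦ Im (z · P(X - w))`. -/
noncomputable def imSMulShift (z w : ℂ) : ℝ[X] →ₗ[ℝ] ℝ[X] :=
  imPart ∘ₗ (z • taylor (-w)).restrictScalars ℝ ∘ₗ (mapAlg ℝ ℂ).toLinearMap

lemma imSMulShift_apply (z w : ℂ) (P : ℝ[X]) :
    imSMulShift z w P = imPart (z • taylor (-w) (P.map (algebraMap ℝ ℂ))) := by
  simp [imSMulShift, mapAlg_eq_map]

lemma eval_imSMulShift (z w : ℂ) (P : ℝ[X]) (t : ℝ) :
    (imSMulShift z w P).eval t = (z * (P.map (algebraMap ℝ ℂ)).eval ((t : ℂ) - w)).im := by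
  rw [imSMulShift_apply, eval_imPart, eval_smul, taylor_eval, smul_eq_mul, sub_eq_add_neg]

lemma imSMulShift_eq_iff (z w : ℂ) (P Q : ℝ[X]) : imSMulShift z w P = Q ↔
    ∀ t : ℝ, (z * (P.map (algebraMap ℝ ℂ)).eval ((t : ℂ) - w)).im = Q.eval t := by
  simp only [← eval_imSMulShift]
  exact ⟨fun h t => by rw [h], Polynomial.funext⟩

lemma degree_imSMulShift {z : ℂ} (hz : z.im ≠ 0) (w : ℂ) (P : ℝ[X]) :
    (imSMulShift z w P).degree = P.degree := by
  rcases eq_or_ne P 0 with rfl | hP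
  · rw [map_zero]
  have hdeg : (imSMulShift z w P).degree ≤ P.natDegree := by
    rw [imSMulShift_apply]
    calc _ ≤ _ := degree_imPart_le _
      _ ≤ _ := degree_smul_le _ _
      _ = P.degree := by rw [degree_taylor, degree_map]
      _ ≤ _ := degree_le_natDegree
  have hcoeff : (imSMulShift z w P).coeff P.natDegree = z.im * P.leadingCoeff := by
    rw [imSMulShift_apply, coeff_imPart, coeff_smul, ← natDegree_map (algebraMap ℝ ℂ),
      coeff_taylor_natDegree, leadingCoeff_map, smul_eq_mul]
    exact Complex.im_mul_ofReal z _
  rw [degree_eq_natDegree hP]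
  exact degree_eq_of_le_of_coeff_ne_zero hdeg
    (hcoeff ▸ mul_ne_zero hz (leadingCoeff_ne_zero.2 hP))

lemma bijective_of_forall_degree_eq {K : Type*} [Field K] {f : K[X] →ₗ[K] K[X]}
    (hf : ∀ p, (f p).degree = p.degree) : Function.Bijective f := by
  have hinj : Function.Injective f := (injective_iff_map_eq_zero f).2 fun p hp =>
    degree_eq_bot.1 <| by rw [← hf, hp, degree_zero]
  refine ⟨hinj, fun q => ?_⟩
  have hmem : ∀ p ∈ degreeLT K (q.natDegree + 1), f p ∈ degreeLT K (q.natDegree + 1) :=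
    fun p hp => by rwa [mem_degreeLT, hf, ← mem_degreeLT]
  have hq : q ∈ degreeLT K (q.natDegree + 1) :=
    mem_degreeLT.2 <| degree_le_natDegree.trans_lt <| by exact_mod_cast q.natDegree.lt_succ_self
  have hinj' : Function.Injective (f.restrict hmem) := fun p p' h =>
    Subtype.ext (hinj (congrArg Subtype.val h))
  obtain ⟨p, hp⟩ := LinearMap.injective_iff_surjective.1 hinj' ⟨q, hq⟩
  exact ⟨p, congrArg Subtype.val hp⟩

end Polynomial

lemma Complex.im_exp_neg_I_mul_ne_zero {Θ d : ℝ} (hΘ : Θ ≠ 0)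
    (hd : ¬ ∃ n : ℤ, d = (Real.pi / Θ) * n) :
    (Complex.exp (-(Complex.I * (d : ℂ) * (Θ : ℂ)))).im ≠ 0 := by
  have harg : -(Complex.I * (d : ℂ) * (Θ : ℂ)) = ((-(d * Θ) : ℝ) : ℂ) * Complex.I := by
    push_cast; ring
  rw [harg, Complex.exp_ofReal_mul_I_im, Real.sin_neg, neg_ne_zero]
  intro h
  obtain ⟨n, hn⟩ := Real.sin_eq_zero_iff.1 h
  exact hd ⟨n, by field_simp; linarith⟩

theorem stmt0_general (Θ d : ℝ) (hΘ : 0 < Θ)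
    (hd : ¬ ∃ n : ℤ, d = (Real.pi / Θ) * n) (Q : Polynomial ℝ) :
    (∃! P : Polynomial ℝ, ∀ t : ℝ,
      (Complex.exp (-(Complex.I * (d : ℂ) * (Θ : ℂ))) *
        (P.map (algebraMap ℝ ℂ)).eval ((t : ℂ) - Complex.I * (Θ : ℂ))).im = Q.eval t) ∧
    (∀ P : Polynomial ℝ,
      (∀ t : ℝ,
        (Complex.exp (-(Complex.I * (d : ℂ) * (Θ : ℂ))) *
          (P.map (algebraMap ℝ ℂ)).eval ((t : ℂ) - Complex.I * (Θ : ℂ))).im = Q.eval t) →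
      P.degree = Q.degree) := by
  have hdeg :=
    degree_imSMulShift (Complex.im_exp_neg_I_mul_ne_zero hΘ.ne' hd) (Complex.I * (Θ : ℂ))
  simp only [← imSMulShift_eq_iff]
  exact ⟨(bijective_of_forall_degree_eq hdeg).existsUnique Q, fun P hP => hP ▸ (hdeg P).symm⟩

/-- Lemma 2.2 (case 1): for `d ∉ (π/Θ)ℤ`, the equation
`Im(α^d · P(t - iΘ)) = Q(t)` has a unique real-polynomial solution `P`,
and `deg P = deg Q`. Here `α^d = e^{-idΘ}`. -/
theorem stmt0 (Θ d : ℝ) (hΘ : 0 < Θ) (hΘ2 : Θ < 2 * Real.pi)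
    (hd : ¬ ∃ n : ℤ, d = (Real.pi / Θ) * n) (Q : Polynomial ℝ) :
    (∃! P : Polynomial ℝ, ∀ t : ℝ,
      (Complex.exp (-(Complex.I * (d : ℂ) * (Θ : ℂ))) *
        (P.map (algebraMap ℝ ℂ)).eval ((t : ℂ) - Complex.I * (Θ : ℂ))).im = Q.eval t) ∧
    (∀ P : Polynomial ℝ,
      (∀ t : ℝ,
        (Complex.exp (-(Complex.I * (d : ℂ) * (Θ : ℂ))) *
          (P.map (algebraMap ℝ ℂ)).eval ((t : ℂ) - Complex.I * (Θ : ℂ))).im = Q.eval t) →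
      P.degree = Q.degree) :=
  stmt0_general Θ d hΘ hd Q
end

section
/- Let a < b be reals, n ≥ 1, and let (d_i, ℓ_i), i = 1,…,n, be n distinct pairs in ℝ × ℕ. Let f_1, …, f_n be nonzero continuous functions [a,b] → ℂ, and define φ(r, θ) = Σ_{i=1}^n r^{d_i} (ln r)^{ℓ_i} f_i(θ) for r > 0, θ ∈ [a,b]. Then there exist a nontrivial closed subinterval I ⊆ [a,b], a constant c > 0, and r₂ ∈ ℝ such that for all r > r₂ and all θ ∈ I, |φ(r,θ)| > c · r^{max_j d_j}. -/
/-!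
Order the terms `r^{dᵢ} (ln r)^{ℓᵢ}` lexicographically by `(dᵢ, ℓᵢ)`; distinctness of the pairs makes
the maximal term `i₀` unique, and every other term is `o` of it as `r → ∞`. On a small interval around
a point where `f_{i₀} ≠ 0`, `|f_{i₀}|` is bounded below while all `fᵢ` are bounded, so the dominant
term controls `φ` uniformly in `θ`. Finally `r^{dᵢ₀} ≤ r^{dᵢ₀} (ln r)^{ℓᵢ₀}` for `r ≥ e`, and
`dᵢ₀ = max dⱼ`.
-/

open Set Filter Asymptotics Topology

lemma Finite.exists_forall_ne_lt_of_injective {ι γ : Type*} [Finite ι] [Nonempty ι] [LinearOrder γ]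
    {g : ι → γ} (hg : Function.Injective g) : ∃ i₀, ∀ i ≠ i₀, g i < g i₀ := by
  obtain ⟨i₀, hi₀⟩ := Finite.exists_max g
  exact ⟨i₀, fun i hi => (hi₀ i).lt_of_ne (hg.ne hi)⟩

lemma exists_Icc_subset_of_mem_nhdsWithin_Icc {a b θ₀ : ℝ} {s : Set ℝ} (hab : a < b)
    (hθ₀ : θ₀ ∈ Icc a b) (hs : s ∈ 𝓝[Icc a b] θ₀) :
    ∃ a' b', a ≤ a' ∧ a' < b' ∧ b' ≤ b ∧ Icc a' b' ⊆ s := by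
  obtain ⟨ε, hε, hball⟩ := Metric.mem_nhdsWithin_iff.mp hs
  refine ⟨max a (θ₀ - ε / 2), min b (θ₀ + ε / 2), le_max_left _ _, ?_, min_le_left _ _, ?_⟩
  · simp only [max_lt_iff, lt_min_iff]
    exact ⟨⟨hab, by linarith [hθ₀.2]⟩, by linarith [hθ₀.1], by linarith⟩
  · refine fun θ hθ => hball ⟨?_, ?_⟩
    · refine Metric.closedBall_subset_ball (half_lt_self hε) ?_
      rw [Real.closedBall_eq_Icc]
      exact Icc_subset_Icc (le_max_right _ _) (min_le_right _ _) hθ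
    · exact Icc_subset_Icc (le_max_left _ _) (min_le_left _ _) hθ

lemma rpow_isBigO_rpow_mul_log_pow (d : ℝ) (ℓ : ℕ) :
    (fun r : ℝ => r ^ d) =O[atTop] fun r => r ^ d * Real.log r ^ ℓ := by
  refine IsBigO.of_bound 1 ?_
  filter_upwards [Real.tendsto_log_atTop.eventually_ge_atTop 1] with r hr
  rw [one_mul, norm_mul, norm_pow]
  exact le_mul_of_one_le_right (norm_nonneg _)
    (one_le_pow₀ (by rwa [Real.norm_of_nonneg (zero_le_one.trans hr)]))

lemma isLittleO_rpow_mul_log_pow_of_toLex_lt {d₁ d₂ : ℝ} {ℓ₁ ℓ₂ : ℕ}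
    (h : toLex (d₁, ℓ₁) < toLex (d₂, ℓ₂)) :
    (fun r : ℝ => r ^ d₁ * Real.log r ^ ℓ₁) =o[atTop] fun r => r ^ d₂ * Real.log r ^ ℓ₂ := by
  rcases Prod.Lex.toLex_lt_toLex.mp h with hd | ⟨rfl, hℓ⟩
  · have hlog : (fun r : ℝ => Real.log r ^ ℓ₁) =o[atTop] fun r => r ^ (d₂ - d₁) := by
      simpa only [Real.rpow_natCast] using
        isLittleO_log_rpow_rpow_atTop (ℓ₁ : ℝ) (sub_pos.mpr hd)
    have hpow : (fun r : ℝ => r ^ d₁ * r ^ (d₂ - d₁)) =ᶠ[atTop] fun r => r ^ d₂ := by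
      filter_upwards [eventually_gt_atTop 0] with r hr
      rw [← Real.rpow_add hr, add_sub_cancel]
    exact (((isBigO_refl _ _).mul_isLittleO hlog).congr' .rfl hpow).trans_isBigO
      (rpow_isBigO_rpow_mul_log_pow d₂ ℓ₂)
  · exact (isBigO_refl _ _).mul_isLittleO
      ((isLittleO_pow_pow_atTop_of_lt hℓ).comp_tendsto Real.tendsto_log_atTop)

section DominantTerm

variable {ι α β E : Type*} [Fintype ι] [NormedAddCommGroup E] [NormedSpace ℝ E]
  {l : Filter β} {S : Set α}

lemma isBigO_sum_smul_of_dominant {c : ι → β → ℝ} {f : ι → α → E} {i₀ : ι} {m : ℝ} (hm : 0 < m)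
    (hc : ∀ i ≠ i₀, c i =o[l] c i₀) (hbdd : ∀ i, ∃ M, ∀ θ ∈ S, ‖f i θ‖ ≤ M)
    (hlow : ∀ θ ∈ S, m ≤ ‖f i₀ θ‖) :
    (fun p : β × α => c i₀ p.1) =O[l ×ˢ 𝓟 S] fun p => ∑ i, c i p.1 • f i p.2 := by
  classical
  set F : ι → β × α → E := fun i p => c i p.1 • f i p.2
  have hS : ∀ᶠ p : β × α in l ×ˢ 𝓟 S, p.2 ∈ S := tendsto_snd (mem_principal_self S)
  have hF : ∀ i, F i =O[l ×ˢ 𝓟 S] fun p => c i p.1 := fun i => by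
    obtain ⟨M, hM⟩ := hbdd i
    refine IsBigO.of_bound M ?_
    filter_upwards [hS] with p hp
    rw [norm_smul, mul_comm]
    exact mul_le_mul_of_nonneg_right (hM _ hp) (norm_nonneg _)
  have hmain : (fun p : β × α => c i₀ p.1) =O[l ×ˢ 𝓟 S] F i₀ := by
    refine IsBigO.of_bound m⁻¹ ?_
    filter_upwards [hS] with p hp
    rw [norm_smul, ← mul_assoc, mul_comm m⁻¹, mul_assoc]
    exact le_mul_of_one_le_right (norm_nonneg _) ((one_le_inv_mul₀ hm).mpr (hlow _ hp))
  have hrest : (∑ i ∈ Finset.univ.erase i₀, F i) =o[l ×ˢ 𝓟 S] F i₀ :=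
    IsLittleO.sum fun i hi => (hF i).trans_isLittleO
      (((hc i (Finset.ne_of_mem_erase hi)).comp_tendsto tendsto_fst).trans_isBigO hmain)
  refine hmain.trans (hrest.right_isBigO_add.congr_right fun p => ?_)
  simp only [Finset.sum_apply, F]
  rw [add_comm, Finset.add_sum_erase _ (fun i => c i p.1 • f i p.2) (Finset.mem_univ i₀)]

end DominantTerm

lemma exists_pos_mul_lt_norm_of_isBigO {α E : Type*} [NormedAddCommGroup E] {S : Set α}
    {g : ℝ → ℝ} {φ : ℝ × α → E} (hg : ∀ᶠ r in atTop, 0 < g r)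
    (h : (fun p : ℝ × α => g p.1) =O[atTop ×ˢ 𝓟 S] φ) :
    ∃ c > 0, ∃ r₂, ∀ r, r₂ < r → ∀ θ ∈ S, c * g r < ‖φ (r, θ)‖ := by
  obtain ⟨C, hC, hCφ⟩ := h.exists_pos
  have hbound := eventually_prod_principal_iff.mp hCφ.bound
  obtain ⟨r₂, hr₂⟩ := eventually_atTop.mp (hbound.and hg)
  refine ⟨(2 * C)⁻¹, by positivity, r₂, fun r hr θ hθ => ?_⟩
  obtain ⟨hle, hpos⟩ := hr₂ r hr.le
  have hgφ : g r ≤ C * ‖φ (r, θ)‖ := by simpa only [Real.norm_of_nonneg hpos.le] using hle θ hθ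
  rw [inv_mul_eq_div, div_lt_iff₀ (by positivity)]
  nlinarith

/-- Lemma 3.2 (behavior at infinity): for `φ(r,θ) = Σᵢ r^{dᵢ} (ln r)^{ℓᵢ} fᵢ(θ)`
with distinct pairs `(dᵢ,ℓᵢ)` and nonzero continuous `fᵢ` on `[a,b]`, there are
a nontrivial closed subinterval `I ⊆ [a,b]`, `c > 0` and `r₂` such that
`|φ(r,θ)| > c · r^{max dⱼ}` for all `r > r₂`, `θ ∈ I`. -/
theorem stmt4 (a b : ℝ) (hab : a < b) (n : ℕ) (hn : 0 < n)
    (d : Fin n → ℝ) (ℓ : Fin n → ℕ)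
    (hdist : Function.Injective (fun i => (d i, ℓ i)))
    (f : Fin n → ℝ → ℂ)
    (hfc : ∀ i, ContinuousOn (f i) (Set.Icc a b))
    (hfne : ∀ i, ∃ θ ∈ Set.Icc a b, f i θ ≠ 0) :
    ∃ a' b' : ℝ, a ≤ a' ∧ a' < b' ∧ b' ≤ b ∧ ∃ c : ℝ, 0 < c ∧ ∃ r₂ : ℝ,
      ∀ r : ℝ, r₂ < r → ∀ θ ∈ Set.Icc a' b',
        c * r ^ (Finset.univ.sup'
            (Finset.univ_nonempty_iff.mpr (Fin.pos_iff_nonempty.mp hn)) d)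
          < ‖∑ i, ((r ^ d i * Real.log r ^ ℓ i : ℝ) : ℂ) * f i θ‖ := by
  have : Nonempty (Fin n) := Fin.pos_iff_nonempty.mp hn
  obtain ⟨i₀, hi₀⟩ := Finite.exists_forall_ne_lt_of_injective
    (g := fun i => toLex (d i, ℓ i)) (toLex.injective.comp hdist)
  have hmax : Finset.univ.sup' (Finset.univ_nonempty_iff.mpr this) d = d i₀ := by
    refine le_antisymm (Finset.sup'_le _ _ fun i _ =>
      Prod.Lex.monotone_fst (toLex (d i, ℓ i)) (toLex (d i₀, ℓ i₀)) ?_)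
      (Finset.le_sup' d (Finset.mem_univ i₀))
    rcases eq_or_ne i i₀ with rfl | hi
    exacts [le_rfl, (hi₀ i hi).le]
  obtain ⟨θ₀, hθ₀, hne⟩ := hfne i₀
  have hm : 0 < ‖f i₀ θ₀‖ / 2 := half_pos (norm_pos_iff.mpr hne)
  obtain ⟨a', b', ha', hab', hb', hnear⟩ := exists_Icc_subset_of_mem_nhdsWithin_Icc hab hθ₀
    ((hfc i₀ θ₀ hθ₀).norm.eventually (le_mem_nhds (half_lt_self (norm_pos_iff.mpr hne))))
  have hdom := isBigO_sum_smul_of_dominant (S := Icc a' b') hm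
    (fun i hi => isLittleO_rpow_mul_log_pow_of_toLex_lt (hi₀ i hi))
    (fun i => isCompact_Icc.exists_bound_of_continuousOn ((hfc i).mono (Icc_subset_Icc ha' hb')))
    hnear
  obtain ⟨c, hc, r₂, hr₂⟩ := exists_pos_mul_lt_norm_of_isBigO
    ((eventually_gt_atTop 0).mono fun r hr => Real.rpow_pos_of_pos hr (d i₀))
    (((rpow_isBigO_rpow_mul_log_pow (d i₀) (ℓ i₀)).comp_tendsto tendsto_fst).trans hdom)
  refine ⟨a', b', ha', hab', hb', c, hc, r₂, fun r hr θ hθ => ?_⟩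
  simpa only [hmax, Complex.real_smul] using hr₂ r hr θ hθ
end

section
/- Let f : ℝ₊* → ℂ be a C² function satisfying the Euler equation (r f'(r))' · r = d² f(r), i.e. r² f''(r) + r f'(r) = d² f(r), for some d > 0. Then there exist a, b ∈ ℂ such that f(r) = a r^d + b r^{-d} for all r > 0. -/
open Set

/-! Writing `D = r d/dr`, the equation is `(D - d)(D + d) f = 0`. Hence `g = (D + d) f` solves the
first-order equation `D g = d g`, so `g = c r^d`, and then `f - c/(2d) r^d` solves `D h = -d h`,
so it is a multiple of `r^{-d}`. -/

lemma hasDerivAt_ofReal_rpow_const {x : ℝ} (hx : x ≠ 0) (p : ℝ) :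
    HasDerivAt (fun y : ℝ => ((y ^ p : ℝ) : ℂ)) ((p * x ^ p / x : ℝ) : ℂ) x := by
  have := (Real.hasDerivAt_rpow_const (p := p) (Or.inl hx)).ofReal_comp
  rwa [Real.rpow_sub_one hx, ← mul_div_assoc] at this

theorem eq_mul_rpow_of_mul_deriv_eq {p : ℝ} {g g' : ℝ → ℂ}
    (hg : ∀ r : ℝ, 0 < r → HasDerivAt g (g' r) r)
    (hode : ∀ r : ℝ, 0 < r → (r : ℂ) * g' r = p * g r) {r : ℝ} (hr : 0 < r) :
    g r = g 1 * ((r ^ p : ℝ) : ℂ) := by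
  set V : ℝ → ℂ := fun x => g x * ((x ^ (-p) : ℝ) : ℂ)
  have hV : ∀ x ∈ Ioi (0 : ℝ), HasDerivAt V 0 x := by
    intro x (hx : 0 < x)
    refine ((hg x hx).mul (hasDerivAt_ofReal_rpow_const hx.ne' (-p))).congr_deriv ?_
    have hx' : (x : ℂ) ≠ 0 := by exact_mod_cast hx.ne'
    push_cast
    field_simp
    linear_combination ((x ^ (-p) : ℝ) : ℂ) * hode x hx
  have hV_const : V r = V 1 :=
    isOpen_Ioi.is_const_of_deriv_eq_zero isPreconnected_Ioi
      (fun x hx => (hV x hx).differentiableAt.differentiableWithinAt) (fun x hx => (hV x hx).deriv)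
      hr (mem_Ioi.2 one_pos)
  have hinv : ((r ^ (-p) : ℝ) : ℂ) * ((r ^ p : ℝ) : ℂ) = 1 := by
    rw [← Complex.ofReal_mul, ← Real.rpow_add hr, neg_add_cancel, Real.rpow_zero,
      Complex.ofReal_one]
  calc g r = V r * ((r ^ p : ℝ) : ℂ) := by rw [mul_assoc, hinv, mul_one]
    _ = g 1 * ((r ^ p : ℝ) : ℂ) := by simp [hV_const, V]

theorem eq_add_mul_rpow_of_mul_deriv_add_eq {d : ℝ} (hd : d ≠ 0) {c : ℂ} {f f' : ℝ → ℂ}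
    (hf : ∀ r : ℝ, 0 < r → HasDerivAt f (f' r) r)
    (hode : ∀ r : ℝ, 0 < r → (r : ℂ) * f' r + d * f r = c * ((r ^ d : ℝ) : ℂ)) {r : ℝ}
    (hr : 0 < r) :
    f r = c / (2 * d) * ((r ^ d : ℝ) : ℂ) + (f 1 - c / (2 * d)) * ((r ^ (-d) : ℝ) : ℂ) := by
  have hd' : (d : ℂ) ≠ 0 := by exact_mod_cast hd
  have h := eq_mul_rpow_of_mul_deriv_eq (p := -d)
    (g := fun r : ℝ => f r - c / (2 * d) * ((r ^ d : ℝ) : ℂ))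
    (fun r hr => (hf r hr).sub ((hasDerivAt_ofReal_rpow_const hr.ne' d).const_mul _))
    (fun r hr => by
      have hr' : (r : ℂ) ≠ 0 := by exact_mod_cast hr.ne'
      push_cast
      field_simp
      linear_combination 2 * hode r hr) hr
  simp only [Real.one_rpow, Complex.ofReal_one, mul_one] at h
  linear_combination h

/-- Euler's equation: a `C²` function `f` on `(0,∞)` satisfying
`r² f''(r) + r f'(r) = d² f(r)` with `d > 0` is of the form
`f(r) = a r^d + b r^{-d}`. -/
theorem stmt8 (d : ℝ) (hd : 0 < d) (f : ℝ → ℂ)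
    (hf : ContDiffOn ℝ 2 f (Set.Ioi 0))
    (hode : ∀ r : ℝ, 0 < r →
      (r : ℂ) ^ 2 * deriv (deriv f) r + (r : ℂ) * deriv f r = ((d : ℝ) : ℂ) ^ 2 * f r) :
    ∃ a b : ℂ, ∀ r : ℝ, 0 < r →
      f r = a * ((r ^ d : ℝ) : ℂ) + b * ((r ^ (-d) : ℝ) : ℂ) := by
  have hf1 : ∀ r : ℝ, 0 < r → HasDerivAt f (deriv f r) r := fun r hr =>
    ((hf.differentiableOn two_ne_zero).differentiableAt (isOpen_Ioi.mem_nhds hr)).hasDerivAt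
  have hf2 : ∀ r : ℝ, 0 < r → HasDerivAt (deriv f) (deriv (deriv f) r) r := fun r hr =>
    (((hf.deriv_of_isOpen isOpen_Ioi (by norm_num)).differentiableOn one_ne_zero).differentiableAt
      (isOpen_Ioi.mem_nhds hr)).hasDerivAt
  set c : ℂ := deriv f 1 + d * f 1
  have hfirst : ∀ r : ℝ, 0 < r → (r : ℂ) * deriv f r + d * f r = c * ((r ^ d : ℝ) : ℂ) :=
    fun r hr => by
      have h := eq_mul_rpow_of_mul_deriv_eq (g := fun r : ℝ => (r : ℂ) * deriv f r + d * f r)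
        (fun r hr => ((hasDerivAt_id r).ofReal_comp.mul (hf2 r hr)).add ((hf1 r hr).const_mul _))
        (fun r hr => by simp only [id, Complex.ofReal_one]; linear_combination hode r hr) hr
      simpa [c] using h
  exact ⟨c / (2 * d), f 1 - c / (2 * d),
    fun r hr => eq_add_mul_rpow_of_mul_deriv_add_eq hd.ne' hf1 hfirst hr⟩
end

section
/- There is a unique sequence of real polynomials (𝒰_n)_{n ∈ ℕ} in the variable Y satisfying: 𝒰₀'' = 0, 𝒰₀'(0) = μ₀/μ₁, 𝒰₀(-1) = 0, and for n ≥ 1: 𝒰_n'' = -𝒰_{n-1}, 𝒰_n'(0) = 0, 𝒰_n(-1) = 0. Moreover, for all Y ∈ (-1,0) and t ∈ (-π/2, π/2), the series Σ_{n≥0} 𝒰_n(Y) t^{2n+1} converges and equals (μ₀/μ₁) · sin(t(Y+1))/cos(t). In particular 𝒰_n(0) = (μ₀/μ₁) T_n, where (T_n) are the Maclaurin coefficients of tan: tan t = Σ_{n≥0} T_n t^{2n+1} on (-π/2, π/2). -/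
open Polynomial

/-- The defining recursion of the layer profiles `(𝒰ₙ)`:
`𝒰₀'' = 0`, `𝒰₀'(0) = μ₀/μ₁`, `𝒰₀(-1) = 0`, and for `n ≥ 1`:
`𝒰ₙ'' = -𝒰ₙ₋₁`, `𝒰ₙ'(0) = 0`, `𝒰ₙ(-1) = 0`. -/
def LayerCond (μ₀ μ₁ : ℝ) (U : ℕ → Polynomial ℝ) : Prop :=
  Polynomial.derivative (Polynomial.derivative (U 0)) = 0 ∧
  (Polynomial.derivative (U 0)).eval 0 = μ₀ / μ₁ ∧
  (U 0).eval (-1) = 0 ∧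
  ∀ n : ℕ,
    Polynomial.derivative (Polynomial.derivative (U (n + 1))) = -(U n) ∧
    (Polynomial.derivative (U (n + 1))).eval 0 = 0 ∧
    (U (n + 1)).eval (-1) = 0

/-!
Write `μ = μ₀/μ₁`. Since `μ sin(t(Y+1))/cos t = μ (sin(tY) + cos(tY) tan t)`, the Taylor series
of `sin` and `cos` and the Cauchy product with `tan t = Σ Tₙ t^{2n+1}` show that its coefficient
of `t^{2n+1}` is the polynomial `μ (sₙ Y^{2n+1} + Σ_{k ≤ n} c_k T_{n-k} Y^{2k})`, where `c_k`, `sₙ`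
are the Taylor coefficients of `cos`, `sin`. Differentiating term by term
(`(sₙ Y^{2n+1})' = cₙ Y^{2n}`, `(c_{k+1} Y^{2k+2})' = -s_k Y^{2k+1}`) gives the recursion and the
conditions at `0`. The condition at `-1` holds because the generating function vanishes at
`Y = -1` and an odd power series summing to `0` near `0` has zero coefficients. Uniqueness is
induction on `n`: a polynomial with `p'' = 0`, `p'(0) = 0` and `p(-1) = 0` vanishes.
-/

open Finset Set Real FormalMultilinearSeries
open scoped Nat ENNReal

section PowerSeries

variable {c : ℕ → ℝ} {R : ℝ}

theorem ofReal_le_radius_ofScalars (h : ∀ t ∈ Ioo (-R) R, Summable fun n => c n * t ^ n) :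
    ENNReal.ofReal R ≤ (ofScalars ℝ c).radius := by
  refine ENNReal.le_of_forall_nnreal_lt fun r hr =>
    (ofScalars ℝ c).le_radius_of_tendsto (l := 0) ?_
  have hrR : (r : ℝ) < R := ENNReal.coe_lt_ofReal.1 hr
  have := (h r ⟨by linarith [r.2], hrR⟩).tendsto_atTop_zero.norm
  simpa [ofScalars_norm, norm_mul, norm_pow, abs_of_nonneg r.2] using this

theorem summable_norm_mul_pow_of_summable (h : ∀ t ∈ Ioo (-R) R, Summable fun n => c n * t ^ n)
    {t : ℝ} (ht : t ∈ Ioo (-R) R) : Summable fun n => ‖c n * t ^ n‖ := by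
  have hlt : (‖t‖₊ : ℝ≥0∞) < (ofScalars ℝ c).radius := by
    refine lt_of_lt_of_le ?_ (ofReal_le_radius_ofScalars h)
    rw [ENNReal.coe_lt_ofReal, coe_nnnorm, Real.norm_eq_abs]
    exact abs_lt.2 ht
  simpa [ofScalars_norm, norm_mul, norm_pow] using (ofScalars ℝ c).summable_norm_mul_pow hlt

theorem eq_zero_of_hasSum_mul_pow_eq_zero (hR : 0 < R)
    (h : ∀ t ∈ Ioo (-R) R, HasSum (fun n => c n * t ^ n) 0) : c = 0 := by
  have hp : HasFPowerSeriesOnBall 0 (ofScalars ℝ c) 0 (ENNReal.ofReal R) := by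
    refine ⟨ofReal_le_radius_ofScalars fun t ht => (h t ht).summable,
      ENNReal.ofReal_pos.2 hR, fun {y} hy => ?_⟩
    rw [Metric.mem_eball, edist_zero_right, Real.enorm_eq_ofReal_abs,
      ENNReal.ofReal_lt_ofReal_iff hR] at hy
    simpa [ofScalars_apply_eq, mul_comm] using h y (abs_lt.1 hy)
  exact (ofScalars_series_eq_zero ℝ).1 hp.hasFPowerSeriesAt.eq_zero

end PowerSeries

section OddPowerSeries

variable {a : ℕ → ℝ} {R : ℝ}

theorem injective_two_mul_add_one : Function.Injective fun m : ℕ => 2 * m + 1 :=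
  fun _ _ h => by simpa using h

theorem hasSum_extend_odd_mul_pow_iff {t s : ℝ} :
    HasSum (fun n => Function.extend (fun m => 2 * m + 1) a 0 n * t ^ n) s ↔
      HasSum (fun m => a m * t ^ (2 * m + 1)) s := by
  rw [← injective_two_mul_add_one.hasSum_iff fun n hn => by
    rw [Function.extend_apply' _ _ _ hn, Pi.zero_apply, zero_mul]]
  simp only [Function.comp_def, injective_two_mul_add_one.extend_apply]

theorem summable_norm_odd_mul_pow_of_summable
    (h : ∀ t ∈ Ioo (-R) R, Summable fun m => a m * t ^ (2 * m + 1))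
    {t : ℝ} (ht : t ∈ Ioo (-R) R) : Summable fun m => ‖a m * t ^ (2 * m + 1)‖ := by
  have := summable_norm_mul_pow_of_summable
    (fun t ht => (hasSum_extend_odd_mul_pow_iff.2 (h t ht).hasSum).summable) ht
  simpa [Function.comp_def, injective_two_mul_add_one.extend_apply] using
    this.comp_injective injective_two_mul_add_one

theorem eq_zero_of_hasSum_odd_mul_pow_eq_zero (hR : 0 < R)
    (h : ∀ t ∈ Ioo (-R) R, HasSum (fun m => a m * t ^ (2 * m + 1)) 0) : a = 0 := by
  have := eq_zero_of_hasSum_mul_pow_eq_zero hR fun t ht =>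
    hasSum_extend_odd_mul_pow_iff.2 (h t ht)
  funext m
  simpa [injective_two_mul_add_one.extend_apply] using congrFun this (2 * m + 1)

end OddPowerSeries

theorem hasSum_sum_range_mul_even_odd {a b : ℕ → ℝ} {t A B : ℝ}
    (ha : HasSum (fun k => a k * t ^ (2 * k)) A) (hb : HasSum (fun m => b m * t ^ (2 * m + 1)) B)
    (ha' : Summable fun k => ‖a k * t ^ (2 * k)‖)
    (hb' : Summable fun m => ‖b m * t ^ (2 * m + 1)‖) :
    HasSum (fun n => (∑ k ∈ range (n + 1), a k * b (n - k)) * t ^ (2 * n + 1)) (A * B) := by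
  have := hasSum_sum_range_mul_of_summable_norm ha' hb'
  rw [ha.tsum_eq, hb.tsum_eq] at this
  refine this.congr_fun fun n => ?_
  rw [sum_mul]
  refine sum_congr rfl fun k hk => ?_
  have hkn : 2 * n + 1 = 2 * k + (2 * (n - k) + 1) := by
    have := mem_range_succ_iff.1 hk; omega
  rw [hkn, pow_add]
  ring

section TaylorTerms

noncomputable def cosTerm (k : ℕ) : ℝ[X] := C ((-1 : ℝ) ^ k / (2 * k)!) * X ^ (2 * k)

noncomputable def sinTerm (n : ℕ) : ℝ[X] := C ((-1 : ℝ) ^ n / (2 * n + 1)!) * X ^ (2 * n + 1)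

@[simp]
theorem cosTerm_zero : cosTerm 0 = 1 := by simp [cosTerm]

theorem derivative_sinTerm (n : ℕ) : derivative (sinTerm n) = cosTerm n := by
  rw [sinTerm, cosTerm, derivative_C_mul_X_pow, Nat.add_sub_cancel, Nat.factorial_succ]
  congr 1
  push_cast
  field_simp

theorem derivative_cosTerm_succ (k : ℕ) : derivative (cosTerm (k + 1)) = -sinTerm k := by
  rw [cosTerm, sinTerm, derivative_C_mul_X_pow, show 2 * (k + 1) = 2 * k + 1 + 1 by ring,
    Nat.add_sub_cancel, Nat.factorial_succ, ← neg_mul, ← C_neg]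
  congr 1
  push_cast
  field_simp
  rw [pow_succ, mul_neg_one, neg_div]

theorem eval_cosTerm (k : ℕ) (x : ℝ) :
    (cosTerm k).eval x = (-1) ^ k * x ^ (2 * k) / (2 * k)! := by
  rw [cosTerm, eval_mul, eval_C, eval_pow, eval_X]
  ring

theorem eval_sinTerm (n : ℕ) (x : ℝ) :
    (sinTerm n).eval x = (-1) ^ n * x ^ (2 * n + 1) / (2 * n + 1)! := by
  rw [sinTerm, eval_mul, eval_C, eval_pow, eval_X]
  ring

theorem eval_zero_cosTerm (k : ℕ) : (cosTerm k).eval 0 = if k = 0 then 1 else 0 := by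
  cases k <;> simp [eval_cosTerm]

theorem eval_zero_derivative_cosTerm (k : ℕ) : (derivative (cosTerm k)).eval 0 = 0 := by
  cases k <;> simp [derivative_cosTerm_succ, eval_sinTerm]

theorem hasSum_eval_cosTerm_mul_pow (x t : ℝ) :
    HasSum (fun k => (cosTerm k).eval x * t ^ (2 * k)) (cos (t * x)) :=
  (Real.hasSum_cos (t * x)).congr_fun fun k => by rw [eval_cosTerm, mul_pow]; ring

theorem hasSum_eval_sinTerm_mul_pow (x t : ℝ) :
    HasSum (fun n => (sinTerm n).eval x * t ^ (2 * n + 1)) (sin (t * x)) :=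
  (Real.hasSum_sin (t * x)).congr_fun fun n => by rw [eval_sinTerm, mul_pow]; ring

theorem summable_norm_eval_cosTerm_mul_pow (x t : ℝ) :
    Summable fun k => ‖(cosTerm k).eval x * t ^ (2 * k)‖ := by
  have hinj : Function.Injective fun k : ℕ => 2 * k := fun _ _ h => by simpa using h
  refine ((Real.summable_pow_div_factorial |t * x|).comp_injective hinj).congr fun k => ?_
  simp only [Function.comp_apply, eval_cosTerm, abs_mul, mul_pow, norm_mul, norm_div, norm_pow,
    norm_neg, norm_one, one_pow, norm_eq_abs, one_mul, RCLike.norm_natCast]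
  ring

end TaylorTerms

section LayerPolynomials

noncomputable def layerPoly (μ : ℝ) (T : ℕ → ℝ) (n : ℕ) : ℝ[X] :=
  C μ * (sinTerm n + ∑ k ∈ range (n + 1), cosTerm k * C (T (n - k)))

variable (μ : ℝ) (T : ℕ → ℝ)

theorem eval_layerPoly (n : ℕ) (x : ℝ) :
    (layerPoly μ T n).eval x =
      μ * ((sinTerm n).eval x + ∑ k ∈ range (n + 1), (cosTerm k).eval x * T (n - k)) := by
  simp [layerPoly, eval_finsetSum]

theorem eval_zero_layerPoly (n : ℕ) : (layerPoly μ T n).eval 0 = μ * T n := by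
  simp [eval_layerPoly, eval_sinTerm, eval_zero_cosTerm]

theorem derivative_derivative_layerPoly_zero : derivative (derivative (layerPoly μ T 0)) = 0 := by
  simp [layerPoly, derivative_sinTerm]

theorem eval_zero_derivative_layerPoly (n : ℕ) :
    (derivative (layerPoly μ T n)).eval 0 = if n = 0 then μ else 0 := by
  simp [layerPoly, derivative_sinTerm, eval_zero_cosTerm, eval_finsetSum,
    eval_zero_derivative_cosTerm]

theorem derivative_derivative_layerPoly_succ (n : ℕ) :
    derivative (derivative (layerPoly μ T (n + 1))) = -layerPoly μ T n := by
  simp only [layerPoly, sum_range_succ' _ (n + 1), Nat.reduceSubDiff, cosTerm_zero, tsub_zero,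
    one_mul, derivative_mul, derivative_C, zero_mul, derivative_add, derivative_sinTerm, map_sum,
    derivative_cosTerm_succ, neg_mul, mul_zero, add_zero, sum_neg_distrib, zero_add, derivative_neg]
  ring

variable {μ T}

theorem hasSum_eval_layerPoly_mul_pow {R : ℝ} {f : ℝ → ℝ}
    (hT : ∀ t ∈ Ioo (-R) R, HasSum (fun n => T n * t ^ (2 * n + 1)) (f t))
    (x : ℝ) {t : ℝ} (ht : t ∈ Ioo (-R) R) :
    HasSum (fun n => (layerPoly μ T n).eval x * t ^ (2 * n + 1))
      (μ * (sin (t * x) + cos (t * x) * f t)) := by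
  have hcos_f := hasSum_sum_range_mul_even_odd (hasSum_eval_cosTerm_mul_pow x t) (hT t ht)
    (summable_norm_eval_cosTerm_mul_pow x t)
    (summable_norm_odd_mul_pow_of_summable (fun t ht => (hT t ht).summable) ht)
  refine (((hasSum_eval_sinTerm_mul_pow x t).add hcos_f).mul_left μ).congr_fun fun n => ?_
  rw [eval_layerPoly]
  ring

theorem eval_neg_one_layerPoly
    (hT : ∀ t ∈ Ioo (-(π / 2)) (π / 2), HasSum (fun n => T n * t ^ (2 * n + 1)) (tan t))
    (n : ℕ) : (layerPoly μ T n).eval (-1) = 0 := by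
  refine congrFun (eq_zero_of_hasSum_odd_mul_pow_eq_zero
    (a := fun n => (layerPoly μ T n).eval (-1)) (half_pos pi_pos) fun t ht => ?_) n
  have h := hasSum_eval_layerPoly_mul_pow (μ := μ) hT (-1) ht
  rwa [mul_neg_one, sin_neg, cos_neg, tan_eq_sin_div_cos,
    mul_div_cancel₀ _ (cos_pos_of_mem_Ioo ht).ne', neg_add_cancel, mul_zero] at h

theorem layerCond_layerPoly {μ₀ μ₁ : ℝ}
    (hT : ∀ t ∈ Ioo (-(π / 2)) (π / 2), HasSum (fun n => T n * t ^ (2 * n + 1)) (tan t)) :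
    LayerCond μ₀ μ₁ (layerPoly (μ₀ / μ₁) T) :=
  ⟨derivative_derivative_layerPoly_zero _ _, by simp [eval_zero_derivative_layerPoly],
    eval_neg_one_layerPoly hT 0, fun n => ⟨derivative_derivative_layerPoly_succ _ _ n,
      by simp [eval_zero_derivative_layerPoly], eval_neg_one_layerPoly hT (n + 1)⟩⟩

end LayerPolynomials

theorem eq_zero_of_derivative_derivative_eq_zero {R : Type*} [CommRing R] [IsDomain R]
    [CharZero R] {p : R[X]} {a b : R} (h₂ : derivative (derivative p) = 0)
    (h₁ : (derivative p).eval a = 0) (h₀ : p.eval b = 0) : p = 0 := by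
  have hp' : derivative p = 0 := by
    rw [eq_C_of_derivative_eq_zero h₂, eval_C] at h₁
    rw [eq_C_of_derivative_eq_zero h₂, h₁, C_0]
  rw [eq_C_of_derivative_eq_zero hp', eval_C] at h₀
  rw [eq_C_of_derivative_eq_zero hp', h₀, C_0]

theorem eq_of_derivative_derivative_eq {R : Type*} [CommRing R] [IsDomain R] [CharZero R]
    {p q : R[X]} {a b : R} (h₂ : derivative (derivative p) = derivative (derivative q))
    (h₁ : (derivative p).eval a = (derivative q).eval a) (h₀ : p.eval b = q.eval b) : p = q :=
  sub_eq_zero.1 <| eq_zero_of_derivative_derivative_eq_zero (a := a) (b := b)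
    (by simp [h₂]) (by simp [h₁]) (by simp [h₀])

theorem LayerCond.unique {μ₀ μ₁ : ℝ} {U V : ℕ → ℝ[X]} (hU : LayerCond μ₀ μ₁ U)
    (hV : LayerCond μ₀ μ₁ V) : U = V := by
  obtain ⟨hU₂, hU₁, hU₀, hU_succ⟩ := hU
  obtain ⟨hV₂, hV₁, hV₀, hV_succ⟩ := hV
  funext n
  induction n with
  | zero =>
    exact eq_of_derivative_derivative_eq (by rw [hU₂, hV₂]) (hU₁.trans hV₁.symm)
      (hU₀.trans hV₀.symm)
  | succ n ih =>
    obtain ⟨hU₂', hU₁', hU₀'⟩ := hU_succ n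
    obtain ⟨hV₂', hV₁', hV₀'⟩ := hV_succ n
    exact eq_of_derivative_derivative_eq (by rw [hU₂', hV₂', ih]) (hU₁'.trans hV₁'.symm)
      (hU₀'.trans hV₀'.symm)

theorem stmt11_general (μ₀ μ₁ : ℝ)
    (T : ℕ → ℝ)
    (hT : ∀ t ∈ Set.Ioo (-(Real.pi / 2)) (Real.pi / 2),
      HasSum (fun n : ℕ => T n * t ^ (2 * n + 1)) (Real.tan t)) :
    (∃! U : ℕ → Polynomial ℝ, LayerCond μ₀ μ₁ U) ∧
    ∀ U : ℕ → Polynomial ℝ, LayerCond μ₀ μ₁ U →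
      (∀ Y ∈ Set.Ioo (-1 : ℝ) 0, ∀ t ∈ Set.Ioo (-(Real.pi / 2)) (Real.pi / 2),
        HasSum (fun n : ℕ => (U n).eval Y * t ^ (2 * n + 1))
          ((μ₀ / μ₁) * (Real.sin (t * (Y + 1)) / Real.cos t))) ∧
      ∀ n : ℕ, (U n).eval 0 = (μ₀ / μ₁) * T n := by
  have hP := layerCond_layerPoly (μ₀ := μ₀) (μ₁ := μ₁) hT
  refine ⟨⟨_, hP, fun V hV => hV.unique hP⟩, fun U hU => ?_⟩
  obtain rfl := hU.unique hP
  refine ⟨fun Y _ t ht => ?_, eval_zero_layerPoly _ _⟩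
  have hcos : cos t ≠ 0 := (cos_pos_of_mem_Ioo ht).ne'
  convert hasSum_eval_layerPoly_mul_pow hT Y ht using 2
  rw [mul_add, mul_one, sin_add, tan_eq_sin_div_cos]
  field_simp

/-- There is a unique sequence of real polynomials `(𝒰ₙ)` satisfying the layer
recursion; for it, `Σₙ 𝒰ₙ(Y) t^{2n+1} = (μ₀/μ₁) sin(t(Y+1))/cos(t)` for
`Y ∈ (-1,0)`, `t ∈ (-π/2,π/2)`; in particular `𝒰ₙ(0) = (μ₀/μ₁) Tₙ` where
`(Tₙ)` are the Maclaurin coefficients of `tan`. -/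
theorem stmt11 (μ₀ μ₁ : ℝ) (h₀ : 0 < μ₀) (h₁ : 0 < μ₁)
    (T : ℕ → ℝ)
    (hT : ∀ t ∈ Set.Ioo (-(Real.pi / 2)) (Real.pi / 2),
      HasSum (fun n : ℕ => T n * t ^ (2 * n + 1)) (Real.tan t)) :
    (∃! U : ℕ → Polynomial ℝ, LayerCond μ₀ μ₁ U) ∧
    ∀ U : ℕ → Polynomial ℝ, LayerCond μ₀ μ₁ U →
      (∀ Y ∈ Set.Ioo (-1 : ℝ) 0, ∀ t ∈ Set.Ioo (-(Real.pi / 2)) (Real.pi / 2),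
        HasSum (fun n : ℕ => (U n).eval Y * t ^ (2 * n + 1))
          ((μ₀ / μ₁) * (Real.sin (t * (Y + 1)) / Real.cos t))) ∧
      ∀ n : ℕ, (U n).eval 0 = (μ₀ / μ₁) * T n :=
  stmt11_general μ₀ μ₁ T hT
end

section
/- Let (q, k) ∈ ℝ × ℕ and let 𝒫(q,k,P) denote the property (q ∉ ℕ or q > k or P(0) = 0). Then the map sending a real polynomial P satisfying 𝒫(q,k,P) to the function Ω → ℝ, z ↦ Im((αz)^q · conj(αz)^k · P(log(αz))), is injective. Equivalently: if Im((αz)^q conj(αz)^k P(log(αz))) = 0 for all z in the sector Ω, and 𝒫(q,k,P) holds, then P = 0. -/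
/-!
Put `w = θ - Θ ∈ (-Θ, 0)` and `c = q - k`. As `P` has real coefficients,
`Im (e^{icw} P(x + iw)) = 0` for all real `x` amounts to the polynomial identity
`e^{icw} P(X + iw) = e^{-icw} P(X - iw)`.
If `P ≠ 0`, comparing leading coefficients gives `sin (cw) = 0` for all `w ∈ (-Θ, 0)`,
so `c = 0`, which the hypothesis excludes unless `P(0) = 0`. Evaluating at `X = iw` gives
`P(2iw) = e^{-2icw} P(0)`, so if `P(0) = 0` then `P` vanishes on a segment of the imaginary axis.
-/

open Polynomial Complex ComplexConjugate Set

namespace Polynomial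

lemma conj_eval_map_ofReal (P : ℝ[X]) (z : ℂ) :
    conj ((P.map (algebraMap ℝ ℂ)).eval z) = (P.map (algebraMap ℝ ℂ)).eval (conj z) := by
  simp only [eval_map_algebraMap, aeval_conj]

lemma C_mul_comp_X_add_C_eq_conj_of_im_eq_zero (P : ℝ[X]) (a b : ℂ)
    (h : ∀ x : ℝ, (a * (P.map (algebraMap ℝ ℂ)).eval (x + b)).im = 0) :
    C a * (P.map (algebraMap ℝ ℂ)).comp (X + C b) =
      C (conj a) * (P.map (algebraMap ℝ ℂ)).comp (X + C (conj b)) := by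
  refine eq_of_infinite_eval_eq _ _ ((infinite_range_of_injective ofReal_injective).mono ?_)
  rintro _ ⟨x, rfl⟩
  simp only [mem_ofPred_eq, eval_mul, eval_C, eval_comp, eval_add, eval_X]
  rw [← conj_eq_iff_im.mpr (h x), map_mul, conj_eval_map_ofReal, map_add, conj_ofReal]

variable {R : Type*} [CommRing R]

lemma eq_of_C_mul_comp_X_add_C_eq [IsDomain R] {Q : R[X]} (hQ : Q ≠ 0) {a a' b b' : R}
    (h : C a * Q.comp (X + C b) = C a' * Q.comp (X + C b')) : a = a' := by
  have hdeg : ∀ c : R, (X + C c).natDegree ≠ 0 := fun c => by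
    rw [natDegree_X_add_C]; exact one_ne_zero
  have hlc := congrArg leadingCoeff h
  simp only [leadingCoeff_mul, leadingCoeff_C, leadingCoeff_comp (hdeg _), leadingCoeff_X_add_C,
    one_pow, mul_one] at hlc
  exact mul_right_cancel₀ (leadingCoeff_ne_zero.mpr hQ) hlc

lemma eval_sub_eq_zero_of_C_mul_comp_X_add_C_eq [NoZeroDivisors R] {Q : R[X]}
    (hQ : Q.eval 0 = 0) {a a' b b' : R} (ha : a ≠ 0)
    (h : C a * Q.comp (X + C b) = C a' * Q.comp (X + C b')) : Q.eval (b - b') = 0 := by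
  have h' := congrArg (eval (-b')) h
  simp only [eval_mul, eval_C, eval_comp, eval_add, eval_X, neg_add_cancel, hQ, mul_zero] at h'
  rw [sub_eq_neg_add]
  exact (mul_eq_zero.mp h').resolve_left ha

lemma eq_zero_of_eval_mul_ofReal_eq_zero {Q : ℂ[X]} {a : ℂ} (ha : a ≠ 0) {S : Set ℝ}
    (hS : S.Infinite) (h : ∀ w ∈ S, Q.eval (a * w) = 0) : Q = 0 := by
  refine eq_zero_of_infinite_isRoot Q ((hS.image (f := fun w : ℝ => a * w) ?_).mono ?_)
  · exact ((mul_right_injective₀ ha).comp ofReal_injective).injOn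
  · rintro _ ⟨w, hw, rfl⟩
    exact h w hw

end Polynomial

lemma Real.exists_mem_Ioo_sin_mul_ne_zero {c Θ : ℝ} (hc : c ≠ 0) (hΘ : 0 < Θ) :
    ∃ w ∈ Ioo (-Θ) 0, Real.sin (c * w) ≠ 0 := by
  set t := min Θ (Real.pi / |c|) / 2 with ht_def
  have hc' : 0 < |c| := abs_pos.mpr hc
  have ht : 0 < t := half_pos (lt_min hΘ (div_pos Real.pi_pos hc'))
  have hct : |c * -t| < Real.pi := by
    have : |c| * min Θ (Real.pi / |c|) ≤ Real.pi :=
      (mul_le_mul_of_nonneg_left (min_le_right _ _) hc'.le).trans_eq (mul_div_cancel₀ _ hc'.ne')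
    rw [abs_mul, abs_neg, abs_of_pos ht, ht_def, mul_div_assoc']
    linarith [Real.pi_pos]
  refine ⟨-t, ⟨by linarith [min_le_left Θ (Real.pi / |c|)], neg_neg_of_pos ht⟩, ?_⟩
  rw [Ne, Real.sin_eq_zero_iff_of_lt_of_lt (abs_lt.mp hct).1 (abs_lt.mp hct).2]
  exact mul_ne_zero hc (neg_ne_zero.mpr ht.ne')

theorem stmt18_general (Θ : ℝ) (hΘ : 0 < Θ)
    (q : ℝ) (k : ℕ) (P : Polynomial ℝ)
    (hP : (¬ ∃ n : ℕ, q = n) ∨ (k : ℝ) < q ∨ P.eval 0 = 0)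
    (hvanish : ∀ r : ℝ, 0 < r → ∀ θ ∈ Set.Ioo (0 : ℝ) Θ,
      (((r ^ (q + (k : ℝ)) : ℝ) : ℂ) *
        Complex.exp (Complex.I * ((q : ℂ) - (k : ℂ)) * ((θ : ℂ) - (Θ : ℂ))) *
        (P.map (algebraMap ℝ ℂ)).eval
          (((Real.log r : ℝ) : ℂ) + Complex.I * ((θ : ℂ) - (Θ : ℂ)))).im = 0) :
    P = 0 := by
  set Pc := P.map (algebraMap ℝ ℂ)
  set a : ℝ → ℂ := fun w => exp (I * ((q : ℂ) - k) * w)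
  have hid : ∀ w ∈ Ioo (-Θ) 0, C (a w) * Pc.comp (X + C (I * w)) =
      C (conj (a w)) * Pc.comp (X + C (conj (I * w))) := by
    refine fun w hw => C_mul_comp_X_add_C_eq_conj_of_im_eq_zero P _ _ fun x => ?_
    have h := hvanish (Real.exp x) (Real.exp_pos x) (Θ + w)
      ⟨by linarith [hw.1], by linarith [hw.2]⟩
    rw [Real.log_exp, ofReal_add, add_sub_cancel_left, mul_assoc, im_ofReal_mul] at h
    exact (mul_eq_zero.mp h).resolve_left (Real.rpow_pos_of_pos (Real.exp_pos x) _).ne'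
  rcases eq_or_ne (P.eval 0) 0 with hP0 | hP0
  · refine (Polynomial.map_eq_zero_iff (algebraMap ℝ ℂ).injective).mp <|
      eq_zero_of_eval_mul_ofReal_eq_zero (mul_ne_zero two_ne_zero I_ne_zero)
        (Ioo_infinite (neg_lt_zero.mpr hΘ)) fun w hw => ?_
    have hPc0 : Pc.eval 0 = 0 := by
      rw [← coeff_zero_eq_eval_zero, coeff_map, coeff_zero_eq_eval_zero, hP0, map_zero]
    have hroot := eval_sub_eq_zero_of_C_mul_comp_X_add_C_eq hPc0 (exp_ne_zero _) (hid w hw)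
    rwa [show I * w - conj (I * w) = 2 * I * w by rw [map_mul, conj_I, conj_ofReal]; ring]
      at hroot
  · have hqk : q - k ≠ 0 := by
      rcases hP with hq | hq | hq
      · exact sub_ne_zero.mpr fun e => hq ⟨k, e⟩
      · exact (sub_pos.mpr hq).ne'
      · exact absurd hq hP0
    by_contra hP
    obtain ⟨w, hw, hsin⟩ := Real.exists_mem_Ioo_sin_mul_ne_zero hqk hΘ
    have ha : a w = exp (((q - k) * w : ℝ) * I) := by simp only [a]; push_cast; ring_nf
    have hreal := eq_of_C_mul_comp_X_add_C_eq
      ((Polynomial.map_ne_zero_iff (algebraMap ℝ ℂ).injective).mpr hP) (hid w hw)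
    rw [eq_comm, conj_eq_iff_im, ha, exp_ofReal_mul_I_im] at hreal
    exact hsin hreal

/-- Lemma 2.3 (injectivity): let `(q,k) ∈ ℝ × ℕ` and suppose the property
`𝒫(q,k,P) = (q ∉ ℕ ∨ q > k ∨ P(0) = 0)` holds. If
`Im((αz)^q conj(αz)^k P(log(αz))) = r^{q+k} Im(e^{i(q-k)(θ-Θ)} P(ln r + i(θ-Θ)))`
vanishes for all `r > 0` and `θ ∈ (0,Θ)`, then `P = 0`. -/
theorem stmt18 (Θ : ℝ) (hΘ : 0 < Θ) (hΘ2 : Θ < 2 * Real.pi)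
    (q : ℝ) (k : ℕ) (P : Polynomial ℝ)
    (hP : (¬ ∃ n : ℕ, q = n) ∨ (k : ℝ) < q ∨ P.eval 0 = 0)
    (hvanish : ∀ r : ℝ, 0 < r → ∀ θ ∈ Set.Ioo (0 : ℝ) Θ,
      (((r ^ (q + (k : ℝ)) : ℝ) : ℂ) *
        Complex.exp (Complex.I * ((q : ℂ) - (k : ℂ)) * ((θ : ℂ) - (Θ : ℂ))) *
        (P.map (algebraMap ℝ ℂ)).eval
          (((Real.log r : ℝ) : ℂ) + Complex.I * ((θ : ℂ) - (Θ : ℂ)))).im = 0) :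
    P = 0 :=
  stmt18_general Θ hΘ q k P hP hvanish
end
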